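/- Let $\{r_j\}_{j\ge 1}$ be given by $r_j=r_0\theta^j$ with $0<\theta<1$, let $l>0$, let $\{s_j\}_{j\ge 1}$ be a decreasing positive sequence, and suppose $r_j^l\le c_0' s_j^{\alpha}$ for all $j\ge 1$ and some constants $c_0'>0$ and positive integer $\alpha$. Let $\{h_j\}_{j\ge 1}$ be real-valued functions on a set $\Pi_0\subset\mathbb{R}^n$, with $h_j$ defined and $\alpha$-times continuously differentiable on the open $s_j$-neighbourhood $\Pi_j$ of $\Pi_0$, and assume $\sup_{\Pi_j}|\partial^\beta h_j|\le M r_j^l$ for all multi-indices $|\beta|_1\le\alpha$. Fix a multi-index $\beta$ with $|\beta|_1\le\alpha-1$ and define, for $\xi,\zeta\in\Pi_0$, $R_j^\beta(\xi,\zeta)=\partial^\beta h_j(\xi)-\sum_{|\beta+k|_1\le\alpha-1}\frac{1}{k!}\partial^{\beta+k}h_j(\zeta)(\xi-\zeta)^k$. Then there is a constant $C$ (depending only on $l,n,\theta,\alpha,c_0'$) such that $\sum_{j=1}^{\infty}|R_j^\beta(\xi,\zeta)|\le C M|\xi-\zeta|^{\alpha-|\beta|_1}$ for all $\xi,\zeta\in\Pi_0$.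 -/

import Mathlib

open Set

/-- Directional derivative in the `i`-th coordinate direction. -/
noncomputable def pdirP {n : ℕ} (i : Fin n) (g : (Fin n → ℝ) → ℝ) : (Fin n → ℝ) → ℝ :=
  fun x => fderiv ℝ g x (Pi.single i 1)

/-- Multi-index partial derivative `∂^β`. -/
noncomputable def pmultiP {n : ℕ} (β : Fin n → ℕ) (g : (Fin n → ℝ) → ℝ) :
    (Fin n → ℝ) → ℝ :=
  (List.finRange n).foldr (fun i h => (pdirP i)^[β i] h) g

/-- The Taylor remainder `R_j^β(ξ,ζ)` of `∂^β h_j` at `ζ` of order `α-1-|β|₁`. -/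
noncomputable def taylorRem {n α : ℕ} (β : Fin n → ℕ) (h : (Fin n → ℝ) → ℝ)
    (ξ ζ : Fin n → ℝ) : ℝ :=
  pmultiP β h ξ -
    ∑ k ∈ (Finset.Iic (fun _ : Fin n => α)).filter
        (fun k : Fin n → ℕ => (∑ i, β i) + (∑ i, k i) ≤ α - 1),
      (∏ i, ((k i).factorial : ℝ))⁻¹ * pmultiP (β + k) h ζ * ∏ i, (ξ i - ζ i) ^ (k i)


/-!
Writing `d = ‖ξ - ζ‖` and `e = α - |β|`, the remainder `R^β(·, ζ)` vanishes at `ζ` and its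
gradient is `(R^{β + eᵢ}(·, ζ))ᵢ`; at `|β| = α` the Taylor polynomial is empty and `R^β = ∂^β h`.
Iterating the mean value inequality along the segment `[ζ, ξ]` therefore gives
`|R_j^β(ξ, ζ)| ≤ nᵉ M r_j^l dᵉ` as soon as that segment lies in `Π_j`, in particular when `d < s_j`.
For the other `j`, bounding each Taylor coefficient separately gives
`|R_j^β(ξ, ζ)| ≤ (N + 1) M r_j^l max(1, d)^(e - 1)`, `N` being the number of coefficients. This is
`O(r_j^l dᵉ)` when `d ≥ 1`; when `d < 1`, the first index `j₁` with `s_{j₁} ≤ d` gives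
`r_j^l = r_{j₁}^l θ^{l (j - j₁)} ≤ c₀' s_{j₁}^α θ^{l (j - j₁)} ≤ c₀' dᵉ θ^{l (j - j₁)}`.
Either way the terms are dominated by geometric series in `θ^l`.
-/

variable {n : ℕ}

noncomputable def pdirList (L : List (Fin n)) (g : (Fin n → ℝ) → ℝ) : (Fin n → ℝ) → ℝ :=
  L.foldr pdirP g

def multiIndexList (β : Fin n → ℕ) : List (Fin n) :=
  (List.finRange n).flatMap fun i => List.replicate (β i) i

lemma count_multiIndexList (β : Fin n → ℕ) (i : Fin n) : (multiIndexList β).count i = β i := by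
  simp [multiIndexList, List.count_flatMap, List.count_replicate, ← Fin.sum_univ_def]

lemma length_multiIndexList (β : Fin n → ℕ) : (multiIndexList β).length = ∑ i, β i := by
  simp [multiIndexList, List.length_flatMap, ← Fin.sum_univ_def]

lemma pdirList_append (L L' : List (Fin n)) (g : (Fin n → ℝ) → ℝ) :
    pdirList (L ++ L') g = pdirList L (pdirList L' g) :=
  List.foldr_append

lemma pdirList_replicate (k : ℕ) (i : Fin n) (g : (Fin n → ℝ) → ℝ) :
    pdirList (List.replicate k i) g = (pdirP i)^[k] g := by
  induction k with
  | zero => rfl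
  | succ k ih => rw [List.replicate_succ, Function.iterate_succ_apply', ← ih]; rfl

lemma pmultiP_eq_pdirList (β : Fin n → ℕ) (g : (Fin n → ℝ) → ℝ) :
    pmultiP β g = pdirList (multiIndexList β) g := by
  unfold pmultiP multiIndexList
  induction List.finRange n with
  | nil => rfl
  | cons i L ih =>
    rw [List.foldr_cons, List.flatMap_cons, ih, pdirList_append, pdirList_replicate]

variable {U : Set (Fin n → ℝ)} {g : (Fin n → ℝ) → ℝ}

lemma contDiffOn_pdirP {m : ℕ} (hU : IsOpen U) (hg : ContDiffOn ℝ (m + 1 : ℕ) g U) (i : Fin n) :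
    ContDiffOn ℝ m (pdirP i g) U :=
  (hg.fderiv_of_isOpen hU (by norm_cast)).clm_apply contDiffOn_const

lemma contDiffOn_pdirList {m : ℕ} (hU : IsOpen U) {L : List (Fin n)}
    (hg : ContDiffOn ℝ (m + L.length : ℕ) g U) : ContDiffOn ℝ m (pdirList L g) U := by
  induction L generalizing m with
  | nil => exact hg
  | cons i L ih =>
    refine contDiffOn_pdirP hU (ih ?_) i
    rwa [List.length_cons, ← add_assoc, add_right_comm] at hg

lemma contDiffOn_pmultiP {m : ℕ} (hU : IsOpen U) (β : Fin n → ℕ)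
    (hg : ContDiffOn ℝ (m + ∑ i, β i : ℕ) g U) : ContDiffOn ℝ m (pmultiP β g) U := by
  rw [pmultiP_eq_pdirList]
  exact contDiffOn_pdirList hU (by rwa [length_multiIndexList])

lemma pdirP_comm {x : Fin n → ℝ} (hg : ContDiffAt ℝ 2 g x) (i j : Fin n) :
    pdirP i (pdirP j g) x = pdirP j (pdirP i g) x := by
  have hd : DifferentiableAt ℝ (fderiv ℝ g) x :=
    (hg.fderiv_right (m := 1) (by norm_num)).differentiableAt one_ne_zero
  have hsecond : ∀ v w : Fin n → ℝ,
      fderiv ℝ (fun y => fderiv ℝ g y w) x v = fderiv ℝ (fderiv ℝ g) x v w := fun v w => by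
    rw [fderiv_clm_apply hd (differentiableAt_const w)]
    simp
  show fderiv ℝ (fun y => fderiv ℝ g y (Pi.single j 1)) x (Pi.single i 1) =
    fderiv ℝ (fun y => fderiv ℝ g y (Pi.single i 1)) x (Pi.single j 1)
  rw [hsecond, hsecond]
  exact hg.isSymmSndFDerivAt (by simp) _ _

lemma eqOn_pdirList_of_perm (hU : IsOpen U) {L L' : List (Fin n)} (hp : L.Perm L')
    (hg : ContDiffOn ℝ L.length g U) : EqOn (pdirList L g) (pdirList L' g) U := by
  induction hp with
  | nil => exact fun _ _ => rfl
  | cons i _ ih =>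
    intro x hx
    have hL := ih (hg.of_le (by simp))
    show fderiv ℝ (pdirList _ g) x (Pi.single i 1) = fderiv ℝ (pdirList _ g) x (Pi.single i 1)
    rw [(hL.eventuallyEq_of_mem (hU.mem_nhds hx)).fderiv_eq]
  | swap i j L =>
    intro x hx
    have h2 : ContDiffOn ℝ 2 (pdirList L g) U :=
      contDiffOn_pdirList hU (by convert hg using 3; simp; omega)
    exact pdirP_comm (h2.contDiffAt (hU.mem_nhds hx)) j i
  | trans hp _ ih₁ ih₂ => exact (ih₁ hg).trans (ih₂ (hp.length_eq ▸ hg))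

lemma perm_multiIndexList_add_single (β : Fin n → ℕ) (i : Fin n) :
    (i :: multiIndexList β).Perm (multiIndexList (β + (Pi.single i 1 : Fin n → ℕ))) := by
  refine List.perm_iff_count.mpr fun j => ?_
  rw [List.count_cons, count_multiIndexList, count_multiIndexList, Pi.add_apply, Pi.single_apply]
  rcases eq_or_ne i j with rfl | hij
  · simp
  · simp [hij, hij.symm]

lemma sum_add_single (β : Fin n → ℕ) (i : Fin n) :
    ∑ j, (β + (Pi.single i 1 : Fin n → ℕ)) j = ∑ j, β j + 1 := by
  simp [Finset.sum_add_distrib]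

lemma pdirP_pmultiP (hU : IsOpen U) (β : Fin n → ℕ) (hg : ContDiffOn ℝ (∑ j, β j + 1 : ℕ) g U)
    (i : Fin n) : EqOn (pdirP i (pmultiP β g)) (pmultiP (β + (Pi.single i 1 : Fin n → ℕ)) g) U := by
  rw [pmultiP_eq_pdirList, pmultiP_eq_pdirList]
  exact eqOn_pdirList_of_perm hU (perm_multiIndexList_add_single β i)
    (by rwa [List.length_cons, length_multiIndexList])

lemma hasFDerivAt_pi_pdirP {x : Fin n → ℝ} (hg : DifferentiableAt ℝ g x) :
    HasFDerivAt g (∑ i, pdirP i g x • (ContinuousLinearMap.proj i : (Fin n → ℝ) →L[ℝ] ℝ)) x := by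
  refine hg.hasFDerivAt.congr_fderiv (ContinuousLinearMap.coe_injective (LinearMap.pi_ext ?_))
  intro i t
  rw [ContinuousLinearMap.coe_coe, ContinuousLinearMap.coe_coe, ← mul_one t, ← smul_eq_mul,
    Pi.single_smul', map_smul, map_smul]
  simp [pdirP, Pi.single_apply]

lemma hasFDerivAt_pmultiP (hU : IsOpen U) (β : Fin n → ℕ)
    (hg : ContDiffOn ℝ (∑ j, β j + 1 : ℕ) g U) {x : Fin n → ℝ} (hx : x ∈ U) :
    HasFDerivAt (pmultiP β g) (∑ i, pmultiP (β + (Pi.single i 1 : Fin n → ℕ)) g x •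
      (ContinuousLinearMap.proj i : (Fin n → ℝ) →L[ℝ] ℝ)) x := by
  have hd : DifferentiableAt ℝ (pmultiP β g) x :=
    ((contDiffOn_pmultiP (m := 1) hU β (by rwa [add_comm])).contDiffAt
      (hU.mem_nhds hx)).differentiableAt one_ne_zero
  simpa only [pdirP_pmultiP hU β hg _ hx] using hasFDerivAt_pi_pdirP hd

def taylorIndex (n α : ℕ) (β : Fin n → ℕ) : Finset (Fin n → ℕ) :=
  (Finset.Iic fun _ => α).filter fun k => ∑ i, β i + ∑ i, k i ≤ α - 1

noncomputable def taylorPoly (α : ℕ) (β : Fin n → ℕ) (h : (Fin n → ℝ) → ℝ) (ζ ξ : Fin n → ℝ) : ℝ :=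
  ∑ k ∈ taylorIndex n α β,
    (∏ i, ((k i).factorial : ℝ))⁻¹ * pmultiP (β + k) h ζ * ∏ i, (ξ i - ζ i) ^ k i

lemma taylorRem_eq_sub {α : ℕ} (β : Fin n → ℕ) (h : (Fin n → ℝ) → ℝ) (ξ ζ : Fin n → ℝ) :
    taylorRem (α := α) β h ξ ζ = pmultiP β h ξ - taylorPoly α β h ζ ξ :=
  rfl

lemma mem_taylorIndex {α : ℕ} {β k : Fin n → ℕ} :
    k ∈ taylorIndex n α β ↔ ∑ i, β i + ∑ i, k i ≤ α - 1 := by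
  refine ⟨fun hk => (Finset.mem_filter.mp hk).2, fun hk => Finset.mem_filter.mpr ⟨?_, hk⟩⟩
  refine Finset.mem_Iic.mpr fun i => show k i ≤ α from ?_
  have := Finset.single_le_sum (fun j _ => Nat.zero_le (k j)) (Finset.mem_univ i)
  omega

lemma sum_taylorIndex_eq_sum_add_single {α : ℕ} (β : Fin n → ℕ) (i : Fin n)
    {f : (Fin n → ℕ) → ℝ} (hf : ∀ k, k i = 0 → f k = 0) :
    ∑ k ∈ taylorIndex n α β, f k =
      ∑ k ∈ taylorIndex n α (β + Pi.single i 1), f (k + Pi.single i 1) := by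
  rw [← Finset.sum_image (add_left_injective _).injOn]
  refine (Finset.sum_subset (fun k hk => ?_) fun k hk hk' => hf k ?_).symm
  · obtain ⟨k, hk', rfl⟩ := Finset.mem_image.mp hk
    rw [mem_taylorIndex, sum_add_single] at hk'
    rw [mem_taylorIndex, sum_add_single]
    omega
  · by_contra hki
    have hle : Pi.single i 1 ≤ k := fun j => by
      by_cases hj : j = i
      · subst hj; simpa using Nat.one_le_iff_ne_zero.mpr hki
      · simp [hj]
    refine hk' (Finset.mem_image.mpr ⟨k - Pi.single i 1, ?_, tsub_add_cancel_of_le hle⟩)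
    have hsum := sum_add_single (k - Pi.single i 1) i
    rw [tsub_add_cancel_of_le hle] at hsum
    rw [mem_taylorIndex] at hk ⊢
    rw [sum_add_single]
    omega

lemma prod_factorial_add_single (k : Fin n → ℕ) (i : Fin n) :
    ∏ j, (((k + Pi.single i 1 : Fin n → ℕ) j).factorial : ℝ) =
      (k i + 1) * ∏ j, ((k j).factorial : ℝ) := by
  rw [← Finset.mul_prod_erase _ _ (Finset.mem_univ i),
    ← Finset.mul_prod_erase _ (fun j => ((k j).factorial : ℝ)) (Finset.mem_univ i),
    Finset.prod_congr rfl fun j hj => by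
      rw [Pi.add_apply, Pi.single_eq_of_ne (Finset.ne_of_mem_erase hj), add_zero]]
  simp [Nat.factorial_succ, mul_assoc]

lemma hasFDerivAt_monomial (k : Fin n → ℕ) (ζ x : Fin n → ℝ) :
    HasFDerivAt (fun ξ => ∏ j, (ξ j - ζ j) ^ k j)
      (∑ i, ((k i : ℝ) * ∏ j, (x j - ζ j) ^ (k - Pi.single i 1 : Fin n → ℕ) j) •
        (ContinuousLinearMap.proj i : (Fin n → ℝ) →L[ℝ] ℝ)) x := by
  have hfactor : ∀ i, HasFDerivAt (fun ξ : Fin n → ℝ => (ξ i - ζ i) ^ k i)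
      (((k i : ℝ) * (x i - ζ i) ^ (k i - 1)) •
        (ContinuousLinearMap.proj i : (Fin n → ℝ) →L[ℝ] ℝ)) x :=
    fun i => (hasDerivAt_pow (k i) (x i - ζ i)).comp_hasFDerivAt x
      ((hasFDerivAt_apply i x).sub_const (ζ i))
  refine (HasFDerivAt.finsetProd fun i _ => hfactor i).congr_fderiv
    (Finset.sum_congr rfl fun i _ => ?_)
  have hprod : ∏ j, (x j - ζ j) ^ (k - Pi.single i 1 : Fin n → ℕ) j =
      (x i - ζ i) ^ (k i - 1) * ∏ j ∈ Finset.univ.erase i, (x j - ζ j) ^ k j := by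
    rw [← Finset.mul_prod_erase _ _ (Finset.mem_univ i)]
    refine congrArg₂ _ (by simp) (Finset.prod_congr rfl fun j hj => ?_)
    rw [Pi.sub_apply, Pi.single_eq_of_ne (Finset.ne_of_mem_erase hj), tsub_zero]
  rw [smul_smul, hprod]
  congr 1
  ring

lemma hasFDerivAt_taylorPoly (α : ℕ) (β : Fin n → ℕ) (h : (Fin n → ℝ) → ℝ) (ζ x : Fin n → ℝ) :
    HasFDerivAt (taylorPoly α β h ζ)
      (∑ i, taylorPoly α (β + Pi.single i 1) h ζ x •
        (ContinuousLinearMap.proj i : (Fin n → ℝ) →L[ℝ] ℝ)) x := by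
  -- `∂ᵢ ((ξ - ζ)^k / k!) = (ξ - ζ)^(k - eᵢ) / (k - eᵢ)!`, so after the shift `k ↦ k + eᵢ` the
  -- `i`-th partial derivative becomes the sum defining `taylorPoly α (β + eᵢ)`.
  refine (HasFDerivAt.fun_sum fun k _ => (hasFDerivAt_monomial k ζ x).const_mul
    ((∏ i, ((k i).factorial : ℝ))⁻¹ * pmultiP (β + k) h ζ)).congr_fderiv ?_
  simp only [Finset.smul_sum, smul_smul]
  rw [Finset.sum_comm]
  refine Finset.sum_congr rfl fun i _ => ?_
  rw [← Finset.sum_smul, sum_taylorIndex_eq_sum_add_single β i fun k hk => by simp [hk]]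
  refine congrArg (· • _) (Finset.sum_congr rfl fun k _ => ?_)
  have hk : ((k + Pi.single i 1 : Fin n → ℕ) i : ℝ) = k i + 1 := by simp
  rw [prod_factorial_add_single, hk, add_tsub_cancel_right, ← add_assoc, add_right_comm]
  field_simp

lemma hasFDerivAt_taylorRem {α : ℕ} (hU : IsOpen U) (β : Fin n → ℕ)
    (hg : ContDiffOn ℝ (∑ j, β j + 1 : ℕ) g U) (ζ : Fin n → ℝ) {x : Fin n → ℝ} (hx : x ∈ U) :
    HasFDerivAt (fun ξ => taylorRem (α := α) β g ξ ζ)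
      (∑ i, taylorRem (α := α) (β + Pi.single i 1) g x ζ •
        (ContinuousLinearMap.proj i : (Fin n → ℝ) →L[ℝ] ℝ)) x := by
  have := (hasFDerivAt_pmultiP hU β hg hx).sub (hasFDerivAt_taylorPoly α β g ζ x)
  rw [← Finset.sum_sub_distrib] at this
  simp only [← sub_smul] at this
  exact this

lemma taylorRem_self {α : ℕ} (β : Fin n → ℕ) (hβ : ∑ i, β i ≤ α - 1)
    (h : (Fin n → ℝ) → ℝ) (ζ : Fin n → ℝ) : taylorRem (α := α) β h ζ ζ = 0 := by
  rw [taylorRem_eq_sub, taylorPoly, Finset.sum_eq_single_of_mem 0 (mem_taylorIndex.mpr (by simpa))]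
  · simp
  · intro k _ hk
    obtain ⟨j, hj⟩ := Function.ne_iff.mp hk
    have hzero : ∏ i, (ζ i - ζ i) ^ k i = 0 :=
      Finset.prod_eq_zero (Finset.mem_univ j) (by rw [sub_self, zero_pow (by simpa using hj)])
    rw [hzero, mul_zero]

lemma norm_sum_smul_proj_le {a : Fin n → ℝ} {C : ℝ} (ha : ∀ i, |a i| ≤ C) :
    ‖∑ i, a i • (ContinuousLinearMap.proj i : (Fin n → ℝ) →L[ℝ] ℝ)‖ ≤ n * C := by
  have hproj : ∀ i : Fin n, ‖(ContinuousLinearMap.proj i : (Fin n → ℝ) →L[ℝ] ℝ)‖ ≤ 1 := fun i =>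
    ContinuousLinearMap.opNorm_le_bound _ zero_le_one fun v => by simpa using norm_le_pi_norm v i
  calc ‖∑ i, a i • (ContinuousLinearMap.proj i : (Fin n → ℝ) →L[ℝ] ℝ)‖ ≤ ∑ _i : Fin n, C :=
        norm_sum_le_of_le _ fun i _ => by
          rw [norm_smul, Real.norm_eq_abs]
          exact (mul_le_of_le_one_right (abs_nonneg _) (hproj i)).trans (ha i)
    _ = n * C := by simp

lemma abs_taylorRem_le_of_segment_subset {α : ℕ} (hα : 1 ≤ α) (hU : IsOpen U)
    (hg : ContDiffOn ℝ α g U) {B : ℝ} (hB0 : 0 ≤ B)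
    (hB : ∀ γ : Fin n → ℕ, ∑ i, γ i = α → ∀ x ∈ U, |pmultiP γ g x| ≤ B)
    {β : Fin n → ℕ} (hβ : ∑ i, β i ≤ α) {ζ ξ : Fin n → ℝ} (hseg : segment ℝ ζ ξ ⊆ U) :
    |taylorRem (α := α) β g ξ ζ| ≤ n ^ (α - ∑ i, β i) * B * ‖ξ - ζ‖ ^ (α - ∑ i, β i) := by
  obtain ⟨m, hm⟩ : ∃ m, α - ∑ i, β i = m := ⟨_, rfl⟩
  rw [hm]
  induction m generalizing β ξ with
  | zero =>
    have hempty : taylorIndex n α β = ∅ := Finset.eq_empty_of_forall_notMem fun k hk => by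
      rw [mem_taylorIndex] at hk
      omega
    simpa [taylorRem_eq_sub, taylorPoly, hempty] using
      hB β (by omega) ξ (hseg (right_mem_segment ℝ ζ ξ))
  | succ m ih =>
    have hgrad : ∀ y ∈ segment ℝ ζ ξ,
        ‖∑ i, taylorRem (α := α) (β + Pi.single i 1) g y ζ •
          (ContinuousLinearMap.proj i : (Fin n → ℝ) →L[ℝ] ℝ)‖ ≤
          n ^ (m + 1) * B * ‖ξ - ζ‖ ^ m := fun y hy => by
      have hsub : segment ℝ ζ y ⊆ U :=
        ((convex_segment ζ ξ).segment_subset (left_mem_segment ℝ ζ ξ) hy).trans hseg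
      refine (norm_sum_smul_proj_le fun i => ih (by rw [sum_add_single]; omega)
        hsub (by rw [sum_add_single]; omega)).trans ?_
      rw [pow_succ, mul_comm _ (n : ℝ), mul_assoc, mul_assoc, mul_assoc]
      gcongr
      exact norm_sub_le_of_mem_segment hy
    have hmvt := (convex_segment ζ ξ).norm_image_sub_le_of_norm_hasFDerivWithin_le
      (fun y hy => (hasFDerivAt_taylorRem hU β (hg.of_le (by norm_cast; omega)) ζ
        (hseg hy)).hasFDerivWithinAt) hgrad (left_mem_segment ℝ ζ ξ) (right_mem_segment ℝ ζ ξ)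
    rw [taylorRem_self β (by omega), sub_zero, Real.norm_eq_abs] at hmvt
    exact hmvt.trans_eq (by ring)

lemma abs_prod_pow_le_norm_pow (v : Fin n → ℝ) (k : Fin n → ℕ) :
    |∏ i, v i ^ k i| ≤ ‖v‖ ^ ∑ i, k i := by
  rw [Finset.abs_prod, ← Finset.prod_pow_eq_pow_sum]
  refine Finset.prod_le_prod (fun i _ => abs_nonneg _) fun i _ => ?_
  rw [abs_pow]
  exact pow_le_pow_left₀ (abs_nonneg _) (by simpa using norm_le_pi_norm v i) _

lemma inv_prod_factorial_le_one (k : Fin n → ℕ) : (∏ i, ((k i).factorial : ℝ))⁻¹ ≤ 1 :=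
  inv_le_one_of_one_le₀ (Finset.one_le_prod fun i _ => Nat.one_le_cast.mpr (k i).factorial_pos)

lemma abs_taylorRem_le_mul_max_one_pow {α : ℕ} {B : ℝ}
    (hB : ∀ γ : Fin n → ℕ, ∑ i, γ i ≤ α → ∀ x ∈ U, |pmultiP γ g x| ≤ B)
    {β : Fin n → ℕ} (hβ : ∑ i, β i ≤ α - 1) {ξ ζ : Fin n → ℝ} (hξ : ξ ∈ U) (hζ : ζ ∈ U) :
    |taylorRem (α := α) β g ξ ζ| ≤
      ((taylorIndex n α β).card + 1) * B * max 1 ‖ξ - ζ‖ ^ (α - 1 - ∑ i, β i) := by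
  set D := max 1 ‖ξ - ζ‖ ^ (α - 1 - ∑ i, β i)
  have hB0 : 0 ≤ B := (abs_nonneg _).trans (hB β (by omega) ξ hξ)
  have hD : 1 ≤ D := one_le_pow₀ (le_max_left _ _)
  have hterm : ∀ k ∈ taylorIndex n α β,
      |(∏ i, ((k i).factorial : ℝ))⁻¹ * pmultiP (β + k) g ζ * ∏ i, (ξ i - ζ i) ^ k i| ≤ B * D := by
    intro k hk
    rw [mem_taylorIndex] at hk
    have hmono : |∏ i, (ξ i - ζ i) ^ k i| ≤ D := by
      refine (abs_prod_pow_le_norm_pow (ξ - ζ) k).trans ?_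
      exact (pow_le_pow_left₀ (norm_nonneg _) (le_max_right _ _) _).trans
        (pow_le_pow_right₀ (le_max_left _ _) (by omega))
    rw [abs_mul, abs_mul, abs_of_pos (by positivity)]
    calc _ ≤ 1 * B * D := by
          gcongr
          · exact inv_prod_factorial_le_one k
          · exact hB _ (by simp [Finset.sum_add_distrib]; omega) ζ hζ
      _ = B * D := by rw [one_mul]
  calc |taylorRem (α := α) β g ξ ζ| ≤ |pmultiP β g ξ| + |taylorPoly α β g ζ ξ| := abs_sub _ _
    _ ≤ B + (taylorIndex n α β).card * (B * D) := by
      gcongr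
      · exact hB β (by omega) ξ hξ
      · exact ((Finset.abs_sum_le_sum_abs _ _).trans
          (Finset.sum_le_card_nsmul _ _ _ hterm)).trans_eq (nsmul_eq_mul _ _)
    _ ≤ ((taylorIndex n α β).card + 1) * B * D := by nlinarith

lemma abs_taylorRem_le_of_mem_thickening {α : ℕ} (hα : 1 ≤ α) {P : Set (Fin n → ℝ)} {s B : ℝ}
    (hs : 0 < s) (hg : ContDiffOn ℝ α g (Metric.thickening s P))
    (hB : ∀ γ : Fin n → ℕ, ∑ i, γ i ≤ α → ∀ x ∈ Metric.thickening s P, |pmultiP γ g x| ≤ B)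
    {β : Fin n → ℕ} (hβ : ∑ i, β i ≤ α - 1) {ξ ζ : Fin n → ℝ} (hξ : ξ ∈ P) (hζ : ζ ∈ P)
    (hd : ‖ξ - ζ‖ < s ∨ 1 ≤ ‖ξ - ζ‖) :
    |taylorRem (α := α) β g ξ ζ| ≤
      (n ^ (α - ∑ i, β i) + (taylorIndex n α β).card + 1) * B * ‖ξ - ζ‖ ^ (α - ∑ i, β i) := by
  have hB0 : 0 ≤ B :=
    (abs_nonneg _).trans (hB β (by omega) ξ (Metric.self_subset_thickening hs P hξ))
  rcases hd with hd | hd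
  · have hseg : segment ℝ ζ ξ ⊆ Metric.thickening s P := fun x hx =>
      Metric.mem_thickening_iff.mpr ⟨ζ, hζ, by
        rw [dist_eq_norm]; exact (norm_sub_le_of_mem_segment hx).trans_lt hd⟩
    refine (abs_taylorRem_le_of_segment_subset hα Metric.isOpen_thickening hg hB0
      (fun γ hγ => hB γ hγ.le) (by omega) hseg).trans ?_
    gcongr
    linarith
  · refine (abs_taylorRem_le_mul_max_one_pow hB hβ (Metric.self_subset_thickening hs P hξ)
      (Metric.self_subset_thickening hs P hζ)).trans ?_
    rw [max_eq_right hd]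
    gcongr
    · linarith [pow_nonneg (Nat.cast_nonneg (α := ℝ) n) (α - ∑ i, β i)]
    · omega

lemma tsum_le_of_le_geometric_add_shift {f : ℕ → ℝ} {T a b : ℝ} (j₀ : ℕ) (hT0 : 0 ≤ T)
    (hT1 : T < 1) (hf0 : ∀ j, 0 ≤ f j)
    (hf : ∀ j, f j ≤ a * T ^ j + if j₀ ≤ j then b * T ^ (j - j₀) else 0) :
    ∑' j, f j ≤ (a + b) / (1 - T) := by
  have hgeom := hasSum_geometric_of_lt_one hT0 hT1
  have hshift : HasSum (fun j => if j₀ ≤ j then b * T ^ (j - j₀) else 0) (b * (1 - T)⁻¹) := by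
    refine (hasSum_nat_add_iff' j₀).mp ?_
    rw [Finset.sum_eq_zero fun j hj => if_neg (by simpa using hj), sub_zero]
    simpa using hgeom.mul_left b
  have hbound := (hgeom.mul_left a).add hshift
  refine (hasSum_le hf (Summable.of_nonneg_of_le hf0 hf hbound.summable).hasSum hbound).trans_eq ?_
  ring

-- Junk value `0` when no `j ≥ 1` has `s j ≤ d`; it is only used when some `j` does.
noncomputable def firstIndexLE (s : ℕ → ℝ) (d : ℝ) : ℕ :=
  sInf {i | 1 ≤ i ∧ s i ≤ d}

lemma firstIndexLE_spec {s : ℕ → ℝ} {d : ℝ} {j : ℕ} (hj : 1 ≤ j) (hsj : s j ≤ d) :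
    1 ≤ firstIndexLE s d ∧ s (firstIndexLE s d) ≤ d :=
  Nat.sInf_mem (s := {i | 1 ≤ i ∧ s i ≤ d}) ⟨j, hj, hsj⟩

lemma firstIndexLE_le {s : ℕ → ℝ} {d : ℝ} {j : ℕ} (hj : 1 ≤ j) (hsj : s j ≤ d) :
    firstIndexLE s d ≤ j :=
  Nat.sInf_le ⟨hj, hsj⟩

lemma rpow_mul_pow_le_pow_sub_firstIndexLE {r θ l c : ℝ} {α e : ℕ} {s : ℕ → ℝ} (hr : 0 ≤ r)
    (hθ : 0 ≤ θ) (hc : 0 ≤ c) (hs : ∀ j, 0 < s j) (hrs : ∀ j, 1 ≤ j → (r * θ ^ j) ^ l ≤ c * s j ^ α)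
    {d : ℝ} (hd : d ≤ 1) (he : e ≤ α) {j : ℕ} (hj : 1 ≤ j) (hsj : s j ≤ d) :
    (r * θ ^ j) ^ l ≤ c * d ^ e * (θ ^ l) ^ (j - firstIndexLE s d) := by
  set j₁ := firstIndexLE s d
  obtain ⟨hj₁, hsj₁⟩ := firstIndexLE_spec hj hsj
  have hsplit : (r * θ ^ j) ^ l = (r * θ ^ j₁) ^ l * (θ ^ l) ^ (j - j₁) := by
    rw [Real.mul_rpow hr (pow_nonneg hθ _), Real.mul_rpow hr (pow_nonneg hθ _),
      ← Real.rpow_pow_comm hθ, ← Real.rpow_pow_comm hθ, mul_assoc, ← pow_add,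
      Nat.add_sub_cancel' (firstIndexLE_le hj hsj)]
  have hd0 : 0 ≤ d := (hs j₁).le.trans hsj₁
  rw [hsplit]
  gcongr
  calc (r * θ ^ j₁) ^ l ≤ c * s j₁ ^ α := hrs j₁ hj₁
    _ ≤ c * d ^ α := by gcongr; exact (hs j₁).le
    _ ≤ c * d ^ e := mul_le_mul_of_nonneg_left (pow_le_pow_of_le_one hd0 hd he) hc

lemma abs_taylorRem_le_geometric {α : ℕ} (hα : 1 ≤ α) {l r θ c M : ℝ} {s : ℕ → ℝ}
    (hr : 0 ≤ r) (hθ : 0 ≤ θ) (hc : 0 ≤ c) (hM : 0 ≤ M) (hs : ∀ j, 0 < s j)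
    (hrs : ∀ j, 1 ≤ j → (r * θ ^ j) ^ l ≤ c * s j ^ α) {P : Set (Fin n → ℝ)} {j : ℕ}
    (hj : 1 ≤ j) (hg : ContDiffOn ℝ α g (Metric.thickening (s j) P))
    (hB : ∀ γ : Fin n → ℕ, ∑ i, γ i ≤ α →
      ∀ x ∈ Metric.thickening (s j) P, |pmultiP γ g x| ≤ M * (r * θ ^ j) ^ l)
    {β : Fin n → ℕ} (hβ : ∑ i, β i ≤ α - 1) {ξ ζ : Fin n → ℝ} (hξ : ξ ∈ P) (hζ : ζ ∈ P) :
    |taylorRem (α := α) β g ξ ζ| ≤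
      (n ^ (α - ∑ i, β i) + (taylorIndex n α β).card + 1) * r ^ l * M *
          ‖ξ - ζ‖ ^ (α - ∑ i, β i) * (θ ^ l) ^ j +
        if firstIndexLE s ‖ξ - ζ‖ ≤ j then
          ((taylorIndex n α β).card + 1) * c * M * ‖ξ - ζ‖ ^ (α - ∑ i, β i) *
            (θ ^ l) ^ (j - firstIndexLE s ‖ξ - ζ‖)
        else 0 := by
  by_cases hd : ‖ξ - ζ‖ < s j ∨ 1 ≤ ‖ξ - ζ‖
  · refine ((abs_taylorRem_le_of_mem_thickening hα (hs j) hg hB hβ hξ hζ hd).trans_eq ?_).trans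
      (le_add_of_nonneg_right (by positivity))
    rw [Real.mul_rpow hr (pow_nonneg hθ _), ← Real.rpow_pow_comm hθ]
    ring
  · obtain ⟨hsj, hd1⟩ := not_or.mp hd
    rw [not_lt] at hsj
    rw [not_le] at hd1
    have hcrude := abs_taylorRem_le_mul_max_one_pow hB hβ
      (Metric.self_subset_thickening (hs j) P hξ) (Metric.self_subset_thickening (hs j) P hζ)
    rw [max_eq_left hd1.le, one_pow, mul_one] at hcrude
    rw [if_pos (firstIndexLE_le hj hsj)]
    refine le_add_of_nonneg_left (by positivity) |>.trans' (hcrude.trans ?_)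
    have := rpow_mul_pow_le_pow_sub_firstIndexLE hr hθ hc hs hrs hd1.le
      (Nat.sub_le α (∑ i, β i)) hj hsj
    calc _ ≤ ((taylorIndex n α β).card + 1) * (M * (c * ‖ξ - ζ‖ ^ (α - ∑ i, β i) *
          (θ ^ l) ^ (j - firstIndexLE s ‖ξ - ζ‖))) := by gcongr
      _ = _ := by ring

theorem inverse_approximation_remainder_estimate_general
    {n α : ℕ} (hα : 1 ≤ α) (l : ℝ) (hl : 0 < l)
    (r0 θ : ℝ) (hr0 : 0 < r0) (hθ0 : 0 < θ) (hθ1 : θ < 1)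
    (s : ℕ → ℝ) (hs_pos : ∀ j, 0 < s j)
    (c0' : ℝ) (hc0' : 0 < c0')
    (hrs : ∀ j : ℕ, 1 ≤ j → (r0 * θ ^ j) ^ l ≤ c0' * s j ^ α)
    (Pi0 : Set (Fin n → ℝ)) (h : ℕ → (Fin n → ℝ) → ℝ) (M : ℝ) (hM : 0 ≤ M)
    (hsmooth : ∀ j : ℕ, 1 ≤ j →
      ContDiffOn ℝ α (h j) (Metric.thickening (s j) Pi0))
    (hbound : ∀ j : ℕ, 1 ≤ j → ∀ β : Fin n → ℕ, (∑ i, β i) ≤ α →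
      ∀ ξ ∈ Metric.thickening (s j) Pi0, |pmultiP β (h j) ξ| ≤ M * (r0 * θ ^ j) ^ l)
    (β : Fin n → ℕ) (hβ : (∑ i, β i) ≤ α - 1) :
    ∃ C : ℝ, 0 < C ∧ ∀ ξ ∈ Pi0, ∀ ζ ∈ Pi0,
      (∑' j : ℕ, if 1 ≤ j then |taylorRem (α := α) β (h j) ξ ζ| else 0) ≤
        C * M * ‖ξ - ζ‖ ^ (α - ∑ i, β i) := by
  set e := α - ∑ i, β i
  set N : ℝ := ((taylorIndex n α β).card : ℝ)
  have hT0 : 0 < θ ^ l := Real.rpow_pos_of_pos hθ0 l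
  have hT1 : θ ^ l < 1 := Real.rpow_lt_one hθ0.le hθ1 hl
  refine ⟨((n ^ e + N + 1) * r0 ^ l + (N + 1) * c0') / (1 - θ ^ l),
    div_pos (by positivity) (sub_pos.mpr hT1), fun ξ hξ ζ hζ => ?_⟩
  refine (tsum_le_of_le_geometric_add_shift (a := (n ^ e + N + 1) * r0 ^ l * M * ‖ξ - ζ‖ ^ e)
    (b := (N + 1) * c0' * M * ‖ξ - ζ‖ ^ e) (firstIndexLE s ‖ξ - ζ‖) hT0.le hT1
    (fun j => by positivity) fun j => ?_).trans_eq (by ring)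
  by_cases hj : 1 ≤ j
  · rw [if_pos hj]
    exact abs_taylorRem_le_geometric hα hr0.le hθ0.le hc0'.le hM hs_pos hrs hj (hsmooth j hj)
      (hbound j hj) hβ hξ hζ
  · rw [if_neg hj]
    positivity

/-- Core estimate of the Inverse Approximation Lemma: summability of the Taylor
remainders of the KAM iterates with the Whitney-Hölder bound
`∑_j |R_j^β(ξ,ζ)| ≤ C M |ξ-ζ|^(α-|β|₁)`. -/
theorem inverse_approximation_remainder_estimate
    {n α : ℕ} (hα : 1 ≤ α) (l : ℝ) (hl : 0 < l)
    (r0 θ : ℝ) (hr0 : 0 < r0) (hθ0 : 0 < θ) (hθ1 : θ < 1)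
    (s : ℕ → ℝ) (hs_pos : ∀ j, 0 < s j) (hs_dec : ∀ j, s (j + 1) ≤ s j)
    (hs1 : s 1 ≤ 1)
    (c0' : ℝ) (hc0' : 0 < c0')
    (hrs : ∀ j : ℕ, 1 ≤ j → (r0 * θ ^ j) ^ l ≤ c0' * s j ^ α)
    (Pi0 : Set (Fin n → ℝ)) (h : ℕ → (Fin n → ℝ) → ℝ) (M : ℝ) (hM : 0 ≤ M)
    (hsmooth : ∀ j : ℕ, 1 ≤ j →
      ContDiffOn ℝ α (h j) (Metric.thickening (s j) Pi0))
    (hbound : ∀ j : ℕ, 1 ≤ j → ∀ β : Fin n → ℕ, (∑ i, β i) ≤ α →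
      ∀ ξ ∈ Metric.thickening (s j) Pi0, |pmultiP β (h j) ξ| ≤ M * (r0 * θ ^ j) ^ l)
    (β : Fin n → ℕ) (hβ : (∑ i, β i) ≤ α - 1) :
    ∃ C : ℝ, 0 < C ∧ ∀ ξ ∈ Pi0, ∀ ζ ∈ Pi0,
      (∑' j : ℕ, if 1 ≤ j then |taylorRem (α := α) β (h j) ξ ζ| else 0) ≤
        C * M * ‖ξ - ζ‖ ^ (α - ∑ i, β i) :=
  inverse_approximation_remainder_estimate_general hα l hl r0 θ hr0 hθ0 hθ1 s hs_pos c0' hc0' hrs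
    Pi0 h M hM hsmooth hbound β hβ
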